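/- Let G be a subgroup of the symmetric group on Fin p and H a subgroup of the symmetric group on Fin q. Let ℬ(G) be a basis of E(G) = {M ∈ ℝ^{p×p} : M P_g = P_g M for all g ∈ G} and ℬ(H) a basis of E(H) = {M ∈ ℝ^{q×q} : M P_h = P_h M for all h ∈ H}. Then the set of Kronecker products {A ⊗ B : A ∈ ℬ(G), B ∈ ℬ(H)} is a basis of the space E(G⊗H) = {M ∈ ℝ^{pq×pq} : M (P_g ⊗ P_h) = (P_g ⊗ P_h) M for all g ∈ G, h ∈ H}. -/

import Mathlib

open Matrix
open scoped Kronecker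
open scoped Classical

noncomputable section

def permMat {m : ℕ} (g : Equiv.Perm (Fin m)) : Matrix (Fin m) (Fin m) ℝ :=
  Matrix.of fun i j => if i = g j then (1 : ℝ) else 0

def frobInner {α β : Type*} [Fintype α] [Fintype β] (A B : Matrix α β ℝ) : ℝ :=
  Matrix.trace (Aᵀ * B)

def indMat {α β : Type*} (R : Set α) (S : Set β) : Matrix α β ℝ :=
  Matrix.of fun i j => if i ∈ R ∧ j ∈ S then (1 : ℝ) else 0

def diagInd {α : Type*} (O : Set α) : Matrix α α ℝ :=
  Matrix.of fun i j => if i = j ∧ i ∈ O then (1 : ℝ) else 0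

def orbitOf {m : ℕ} (G : Subgroup (Equiv.Perm (Fin m))) (i : Fin m) : Set (Fin m) :=
  {j | ∃ g ∈ G, g i = j}

def commutant {α : Type*} [Fintype α] [DecidableEq α] (S : Set (Matrix α α ℝ)) :
    Submodule ℝ (Matrix α α ℝ) where
  carrier := {M | ∀ Q ∈ S, M * Q = Q * M}
  add_mem' := by
    intro a b ha hb Q hQ
    rw [Matrix.add_mul, Matrix.mul_add, ha Q hQ, hb Q hQ]
  zero_mem' := by intro Q hQ; simp
  smul_mem' := by
    intro c M hM Q hQ
    rw [Matrix.smul_mul, Matrix.mul_smul, hM Q hQ]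

def fixedSpace {α : Type*} [Fintype α] (S : Set (Matrix α α ℝ)) : Submodule ℝ (α → ℝ) where
  carrier := {v | ∀ Q ∈ S, Q.mulVec v = v}
  add_mem' := by
    intro a b ha hb Q hQ
    rw [Matrix.mulVec_add, ha Q hQ, hb Q hQ]
  zero_mem' := by intro Q hQ; simp
  smul_mem' := by
    intro c v hv Q hQ
    rw [Matrix.mulVec_smul, hv Q hQ]

def oplus {p q : ℕ} (A : Matrix (Fin p) (Fin p) ℝ) (B : Matrix (Fin q) (Fin q) ℝ) :
    Matrix (Fin (p + q)) (Fin (p + q)) ℝ :=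
  Matrix.reindex finSumFinEquiv finSumFinEquiv (Matrix.fromBlocks A 0 0 B)

def wr {p q : ℕ} (h : Fin p → Equiv.Perm (Fin q)) (g : Equiv.Perm (Fin p)) :
    Matrix (Fin p × Fin q) (Fin p × Fin q) ℝ :=
  Matrix.of fun x y => if x.1 = g y.1 ∧ x.2 = h x.1 y.2 then (1 : ℝ) else 0

def IsBasisOfSet {N : Type*} [AddCommGroup N] [Module ℝ N] (s : Set N)
    (W : Submodule ℝ N) : Prop :=
  LinearIndependent ℝ (fun x : s => (x : N)) ∧ Submodule.span ℝ s = W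

def vecCol {m : ℕ} (X : Matrix (Fin m) (Fin m) ℝ) : Fin m × Fin m → ℝ :=
  fun x => X x.2 x.1

def rearrange {p q : ℕ} (M : Matrix (Fin p × Fin q) (Fin p × Fin q) ℝ) :
    Matrix (Fin p × Fin p) (Fin q × Fin q) ℝ :=
  Matrix.of fun x y => M (x.2, y.2) (x.1, y.1)

def frob {α β : Type*} [Fintype α] [Fintype β] (A : Matrix α β ℝ) : ℝ :=
  Real.sqrt (∑ i, ∑ j, (A i j) ^ 2)

def l2norm {k : ℕ} (v : Fin k → ℝ) : ℝ := Real.sqrt (∑ r, v r ^ 2)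


theorem permMat_mul {m : ℕ} (g g' : Equiv.Perm (Fin m)) :
    permMat (g * g') = permMat g * permMat g' := by
  ext i j; simp [permMat, Matrix.mul_apply, ite_and]
  exact if_congr Iff.rfl rfl rfl

theorem permMat_one {m : ℕ} : permMat (1 : Equiv.Perm (Fin m)) = 1 := by
  ext i j; simp [permMat, Matrix.one_apply, eq_comm]
  exact if_congr Iff.rfl rfl rfl

theorem permMat_mul_inv {m : ℕ} (g : Equiv.Perm (Fin m)) :
    permMat g * permMat g⁻¹ = 1 := by
  rw [← permMat_mul, mul_inv_cancel, permMat_one]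

theorem permMat_inv_mul {m : ℕ} (g : Equiv.Perm (Fin m)) :
    permMat g⁻¹ * permMat g = 1 := by
  rw [← permMat_mul, inv_mul_cancel, permMat_one]

theorem stdBasis_kron {p q : ℕ} (i j : Fin p) (k l : Fin q) (c : ℝ) :
    Matrix.single (i,k) (j,l) c
      = c • (Matrix.single i j (1:ℝ) ⊗ₖ Matrix.single k l (1:ℝ)) := by
  ext ⟨i',k'⟩ ⟨j',l'⟩
  simp [Matrix.single, Prod.ext_iff, ite_and, and_assoc]
  aesop

theorem kron_mem_span {p q : ℕ} {bG : Set (Matrix (Fin p) (Fin p) ℝ)}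
    {bH : Set (Matrix (Fin q) (Fin q) ℝ)}
    {A : Matrix (Fin p) (Fin p) ℝ} {B : Matrix (Fin q) (Fin q) ℝ}
    (hA : A ∈ Submodule.span ℝ bG) (hB : B ∈ Submodule.span ℝ bH) :
    A ⊗ₖ B ∈ Submodule.span ℝ {M | ∃ A ∈ bG, ∃ B ∈ bH, M = A ⊗ₖ B} := by
  induction hA using Submodule.span_induction with
  | mem X hX =>
    induction hB using Submodule.span_induction with
    | mem Y hY => exact Submodule.subset_span ⟨X, hX, Y, hY, rfl⟩
    | zero => rw [Matrix.kronecker_zero]; exact Submodule.zero_mem _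
    | add y z _ _ hy hz => rw [Matrix.kronecker_add]; exact Submodule.add_mem _ hy hz
    | smul c y _ hy => rw [Matrix.kronecker_smul]; exact Submodule.smul_mem _ _ hy
  | zero => rw [Matrix.zero_kronecker]; exact Submodule.zero_mem _
  | add y z _ _ hy hz => rw [Matrix.add_kronecker]; exact Submodule.add_mem _ hy hz
  | smul c y _ hy => rw [Matrix.smul_kronecker]; exact Submodule.smul_mem _ _ hy

theorem kron_sum_eq_zero {p q : ℕ} {bG : Set (Matrix (Fin p) (Fin p) ℝ)}
    [Fintype bG]
    (hiG : LinearIndependent ℝ (fun x : bG => (x : Matrix (Fin p) (Fin p) ℝ)))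
    (C : bG → Matrix (Fin q) (Fin q) ℝ)
    (h : ∑ A : bG, (A : Matrix (Fin p) (Fin p) ℝ) ⊗ₖ C A = 0) : ∀ A, C A = 0 := by
  intro A
  ext k l
  refine Fintype.linearIndependent_iff.mp hiG (fun A => C A k l) ?_ A
  ext i j
  have h' := congrFun (congrFun h (i,k)) (j,l)
  simpa [Matrix.sum_apply, mul_comm] using h'

theorem avg_mem {m : ℕ} (K : Subgroup (Equiv.Perm (Fin m))) [Fintype K]
    (X : Matrix (Fin m) (Fin m) ℝ) :
    (∑ g : K, permMat (g : Equiv.Perm (Fin m)) * X * permMat (g : Equiv.Perm (Fin m))⁻¹)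
      ∈ commutant {Q | ∃ g ∈ K, Q = permMat g} := by
  rintro Q ⟨g₀, hg₀, rfl⟩
  rw [Finset.sum_mul, Matrix.mul_sum]
  refine (Fintype.sum_equiv (Equiv.mulLeft (⟨g₀, hg₀⟩ : K)) _ _ ?_).symm
  intro g
  have hco : ((⟨g₀, hg₀⟩ * g : K) : Equiv.Perm (Fin m)) = g₀ * (g : Equiv.Perm (Fin m)) := rfl
  rw [Equiv.coe_mulLeft, hco, permMat_mul, _root_.mul_inv_rev, permMat_mul]
  simp only [Matrix.mul_assoc, permMat_inv_mul, Matrix.mul_one]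

theorem sum_kron_sum {p q : ℕ} {ι κ : Type*} [Fintype ι] [Fintype κ]
    (A : ι → Matrix (Fin p) (Fin p) ℝ) (B : κ → Matrix (Fin q) (Fin q) ℝ) :
    (∑ i, A i) ⊗ₖ (∑ j, B j) = ∑ x : ι × κ, A x.1 ⊗ₖ B x.2 := by
  ext x y
  obtain ⟨i, k⟩ := x
  obtain ⟨j, l⟩ := y
  simp [Matrix.sum_apply, Finset.sum_mul_sum, Fintype.sum_prod_type]

/-- Given bases `bG` of `E(G)` and `bH` of `E(H)`, the set of Kronecker
products `{A ⊗ B : A ∈ bG, B ∈ bH}` is a basis of `E(G ⊗ H)`. -/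
theorem kronecker_equivariant_basis {p q : ℕ}
    (G : Subgroup (Equiv.Perm (Fin p))) (H : Subgroup (Equiv.Perm (Fin q)))
    (bG : Set (Matrix (Fin p) (Fin p) ℝ)) (bH : Set (Matrix (Fin q) (Fin q) ℝ))
    (hbG : IsBasisOfSet bG (commutant {Q | ∃ g ∈ G, Q = permMat g}))
    (hbH : IsBasisOfSet bH (commutant {Q | ∃ h ∈ H, Q = permMat h})) :
    IsBasisOfSet
      {M | ∃ A ∈ bG, ∃ B ∈ bH, M = A ⊗ₖ B}
      (commutant {Q | ∃ g ∈ G, ∃ h ∈ H, Q = permMat g ⊗ₖ permMat h}) := by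
  classical
  haveI : Fintype bG := (hbG.1.setFinite).fintype
  haveI : Fintype bH := (hbH.1.setFinite).fintype
  set f : bG × bH → Matrix (Fin p × Fin q) (Fin p × Fin q) ℝ :=
    fun x => (x.1 : Matrix (Fin p) (Fin p) ℝ) ⊗ₖ (x.2 : Matrix (Fin q) (Fin q) ℝ) with hfdef
  have hSr : {M | ∃ A ∈ bG, ∃ B ∈ bH, M = A ⊗ₖ B} = Set.range f := by
    ext M
    constructor
    · rintro ⟨A, hA, B, hB, rfl⟩; exact ⟨(⟨A, hA⟩, ⟨B, hB⟩), rfl⟩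
    · rintro ⟨⟨A, B⟩, rfl⟩; exact ⟨A, A.2, B, B.2, rfl⟩
  have hf : LinearIndependent ℝ f := by
    rw [Fintype.linearIndependent_iff]
    intro g hg
    rw [Fintype.sum_prod_type] at hg
    have hg2 : ∑ A : bG, (A : Matrix (Fin p) (Fin p) ℝ) ⊗ₖ
        (∑ B : bH, g (A, B) • (B : Matrix (Fin q) (Fin q) ℝ)) = 0 := by
      rw [← hg]
      refine Finset.sum_congr rfl fun A _ => ?_
      ext x y
      obtain ⟨i, k⟩ := x
      obtain ⟨j, l⟩ := y
      simp only [hfdef, kroneckerMap_apply, Matrix.sum_apply, Matrix.smul_apply,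
        smul_eq_mul, Finset.mul_sum]
      exact Finset.sum_congr rfl fun B _ => by ring
    have hC := kron_sum_eq_zero hbG.1 _ hg2
    rintro ⟨A, B⟩
    have : ∀ B : bH, g (A, B) = 0 := by
      refine Fintype.linearIndependent_iff.mp hbH.1 (fun B => g (A, B)) ?_
      exact hC A
    exact this B
  constructor
  · rw [hSr]
    exact (linearIndepOn_id_range_iff hf.injective).mpr hf
  · apply le_antisymm
    · rw [Submodule.span_le]
      rintro M ⟨A, hA, B, hB, rfl⟩
      rintro Q ⟨g, hg, h, hh, rfl⟩
      have hAg : A * permMat g = permMat g * A := by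
        have : A ∈ commutant {Q | ∃ g ∈ G, Q = permMat g} := by
          rw [← hbG.2]; exact Submodule.subset_span hA
        exact this _ ⟨g, hg, rfl⟩
      have hBh : B * permMat h = permMat h * B := by
        have : B ∈ commutant {Q | ∃ h ∈ H, Q = permMat h} := by
          rw [← hbH.2]; exact Submodule.subset_span hB
        exact this _ ⟨h, hh, rfl⟩
      rw [← Matrix.mul_kronecker_mul, hAg, hBh, Matrix.mul_kronecker_mul]
    · intro M hM
      haveI : Fintype G := Fintype.ofFinite G
      haveI : Fintype H := Fintype.ofFinite H
      have hcard : ((Fintype.card G * Fintype.card H : ℕ) : ℝ) ≠ 0 :=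
        Nat.cast_ne_zero.mpr (Nat.mul_ne_zero Fintype.card_ne_zero Fintype.card_ne_zero)
      have hterm : ∀ (g : G) (h : H),
          (permMat (g : Equiv.Perm (Fin p)) ⊗ₖ permMat (h : Equiv.Perm (Fin q))) * M *
            (permMat (g : Equiv.Perm (Fin p))⁻¹ ⊗ₖ permMat (h : Equiv.Perm (Fin q))⁻¹) = M := by
        intro g h
        have hq := hM _ ⟨(g : Equiv.Perm (Fin p)), g.2, (h : Equiv.Perm (Fin q)), h.2, rfl⟩
        have hinv : (permMat (g : Equiv.Perm (Fin p)) ⊗ₖ permMat (h : Equiv.Perm (Fin q))) *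
            (permMat (g : Equiv.Perm (Fin p))⁻¹ ⊗ₖ permMat (h : Equiv.Perm (Fin q))⁻¹) = 1 := by
          rw [← Matrix.mul_kronecker_mul, permMat_mul_inv, permMat_mul_inv,
            Matrix.one_kronecker_one]
        rw [← hq, Matrix.mul_assoc, hinv, Matrix.mul_one]
      have hMfix : M = ((Fintype.card G * Fintype.card H : ℕ) : ℝ)⁻¹ •
          ∑ x : G × H, (permMat (x.1 : Equiv.Perm (Fin p)) ⊗ₖ permMat (x.2 : Equiv.Perm (Fin q)))
            * M * (permMat (x.1 : Equiv.Perm (Fin p))⁻¹ ⊗ₖ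
              permMat (x.2 : Equiv.Perm (Fin q))⁻¹) := by
        have hs : (∑ x : G × H,
            (permMat (x.1 : Equiv.Perm (Fin p)) ⊗ₖ permMat (x.2 : Equiv.Perm (Fin q)))
              * M * (permMat (x.1 : Equiv.Perm (Fin p))⁻¹ ⊗ₖ
                permMat (x.2 : Equiv.Perm (Fin q))⁻¹))
            = ((Fintype.card G * Fintype.card H : ℕ) : ℝ) • M := by
          rw [Finset.sum_congr rfl fun x _ => hterm x.1 x.2, Finset.sum_const,
            Finset.card_univ, Fintype.card_prod, Nat.cast_smul_eq_nsmul ℝ]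
        rw [hs, smul_smul, inv_mul_cancel₀ hcard, one_smul]
      rw [hMfix]
      refine Submodule.smul_mem _ _ ?_
      have hexp : ∀ x : G × H,
          (permMat (x.1 : Equiv.Perm (Fin p)) ⊗ₖ permMat (x.2 : Equiv.Perm (Fin q)))
            * M * (permMat (x.1 : Equiv.Perm (Fin p))⁻¹ ⊗ₖ
              permMat (x.2 : Equiv.Perm (Fin q))⁻¹)
          = ∑ r : Fin p × Fin q, ∑ c : Fin p × Fin q, M r c •
              ((permMat (x.1 : Equiv.Perm (Fin p)) * Matrix.single r.1 c.1 1 *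
                  permMat (x.1 : Equiv.Perm (Fin p))⁻¹) ⊗ₖ
               (permMat (x.2 : Equiv.Perm (Fin q)) * Matrix.single r.2 c.2 1 *
                  permMat (x.2 : Equiv.Perm (Fin q))⁻¹)) := by
        intro x
        conv_lhs => rw [matrix_eq_sum_single M]
        simp only [Matrix.mul_sum, Matrix.sum_mul]
        refine Finset.sum_congr rfl fun r _ => Finset.sum_congr rfl fun c _ => ?_
        rw [show Matrix.single r c (M r c)
            = M r c • (Matrix.single r.1 c.1 (1:ℝ) ⊗ₖ Matrix.single r.2 c.2 (1:ℝ)) from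
            stdBasis_kron r.1 c.1 r.2 c.2 (M r c)]
        rw [Matrix.mul_smul, Matrix.smul_mul, ← Matrix.mul_kronecker_mul,
          ← Matrix.mul_kronecker_mul]
      rw [Finset.sum_congr rfl fun x _ => hexp x]
      rw [Finset.sum_comm]
      rw [Finset.sum_congr rfl fun r _ => Finset.sum_comm]
      refine Submodule.sum_mem _ fun r _ => Submodule.sum_mem _ fun c _ => ?_
      rw [← Finset.smul_sum,
        ← sum_kron_sum (fun g : G => permMat (g : Equiv.Perm (Fin p)) *
            Matrix.single r.1 c.1 1 * permMat (g : Equiv.Perm (Fin p))⁻¹)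
          (fun h : H => permMat (h : Equiv.Perm (Fin q)) *
            Matrix.single r.2 c.2 1 * permMat (h : Equiv.Perm (Fin q))⁻¹)]
      refine Submodule.smul_mem _ _ ?_
      refine kron_mem_span ?_ ?_
      · rw [hbG.2]; exact avg_mem G _
      · rw [hbH.2]; exact avg_mem H _
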